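/- Suppose the preference function ψ takes values in {0,1}, and let Ŝ ⊆ S be a set of cluster representatives such that every trajectory j ∈ T has some s ∈ Ŝ with ψ(j,s) = 1. Let Q̂_0 = ∅, Q̂_1, …, Q̂_k with k ≤ |Ŝ| be a greedy sequence for U over the ground set Ŝ (part of a greedy sequence over Ŝ that, continued for |Ŝ| steps, exhausts Ŝ). Then U(Ŝ) = |T|, and for every subset OPT ⊆ S, U(Q̂_k) ≥ (k/|Ŝ|) · U(OPT). -/

import Mathlib

open Finset

/-- Utility of a single trajectory with preference function `ψ` over a set of sites `Q`:
the maximum preference score over `Q`, with value `0` on the empty set. -/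
noncomputable def trajU {S : Type*} (ψ : S → ℝ) (Q : Finset S) : ℝ :=
  if h : Q.Nonempty then Q.sup' h ψ else 0

/-- Total utility: sum of the per-trajectory utilities over all trajectories. -/
noncomputable def totalU {T S : Type*} [Fintype T] (ψ : T → S → ℝ) (Q : Finset S) : ℝ :=
  ∑ j, trajU (ψ j) Q

lemma trajU_empty {S : Type*} (ψ : S → ℝ) : trajU ψ (∅ : Finset S) = 0 := by
  simp [trajU]

lemma trajU_nonneg {S : Type*} (ψ : S → ℝ) (hψ : ∀ s, 0 ≤ ψ s) (Q : Finset S) :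
    0 ≤ trajU ψ Q := by
  unfold trajU
  split
  · next h =>
    obtain ⟨s, hs⟩ := h
    exact le_trans (hψ s) (le_sup' ψ hs)
  · exact le_refl 0

lemma trajU_le_one {S : Type*} (ψ : S → ℝ) (hψ : ∀ s, ψ s ≤ 1) (Q : Finset S) :
    trajU ψ Q ≤ 1 := by
  unfold trajU
  split
  next h => exact sup'_le h _ fun s _ => hψ s
  next => exact zero_le_one

lemma trajU_insert {S : Type*} [DecidableEq S] (ψ : S → ℝ) {s : S} (hs : 0 ≤ ψ s)
    (Q : Finset S) : trajU ψ (insert s Q) = max (ψ s) (trajU ψ Q) := by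
  by_cases hQ : Q.Nonempty
  · rw [trajU, dif_pos (insert_nonempty _ _), trajU, dif_pos hQ, sup'_insert]
  · rw [not_nonempty_iff_eq_empty] at hQ
    subst hQ
    simp [trajU, max_eq_left hs]

lemma trajU_mono {S : Type*} (ψ : S → ℝ) (hψ : ∀ s, 0 ≤ ψ s) {A B : Finset S}
    (hAB : A ⊆ B) : trajU ψ A ≤ trajU ψ B := by
  by_cases hA : A.Nonempty
  · have hB : B.Nonempty := hA.mono hAB
    rw [trajU, dif_pos hA, trajU, dif_pos hB]
    exact sup'_le _ _ fun a ha => le_sup' ψ (hAB ha)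
  · rw [not_nonempty_iff_eq_empty] at hA
    subst hA
    rw [trajU_empty]
    exact trajU_nonneg ψ hψ B

lemma trajU_submod {S : Type*} [DecidableEq S] (ψ : S → ℝ) (hψ : ∀ s, 0 ≤ ψ s)
    {A B : Finset S} (hAB : A ⊆ B) (s : S) :
    trajU ψ (insert s B) + trajU ψ A ≤ trajU ψ (insert s A) + trajU ψ B := by
  rw [trajU_insert ψ (hψ s), trajU_insert ψ (hψ s)]
  have h := trajU_mono ψ hψ hAB
  rcases le_total (ψ s) (trajU ψ A) with h1 | h1 <;>
    rcases le_total (ψ s) (trajU ψ B) with h2 | h2 <;>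
    simp [max_eq_left, max_eq_right, h1, h2] <;> linarith

lemma totalU_empty {T S : Type*} [Fintype T] (ψ : T → S → ℝ) :
    totalU ψ (∅ : Finset S) = 0 := by
  simp [totalU, trajU_empty]

lemma totalU_le_card {T S : Type*} [Fintype T] (ψ : T → S → ℝ)
    (hψ : ∀ j s, ψ j s ≤ 1) (Q : Finset S) : totalU ψ Q ≤ (Fintype.card T : ℝ) := by
  calc totalU ψ Q ≤ ∑ _j : T, (1 : ℝ) :=
        Finset.sum_le_sum fun j _ => trajU_le_one (ψ j) (hψ j) Q
    _ = (Fintype.card T : ℝ) := by simp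

lemma totalU_mono {T S : Type*} [Fintype T] (ψ : T → S → ℝ)
    (hψ : ∀ j s, 0 ≤ ψ j s) {A B : Finset S} (hAB : A ⊆ B) :
    totalU ψ A ≤ totalU ψ B :=
  Finset.sum_le_sum fun j _ => trajU_mono (ψ j) (hψ j) hAB

lemma totalU_submod {T S : Type*} [Fintype T] [DecidableEq S] (ψ : T → S → ℝ)
    (hψ : ∀ j s, 0 ≤ ψ j s) {A B : Finset S} (hAB : A ⊆ B) (s : S) :
    totalU ψ (insert s B) + totalU ψ A ≤ totalU ψ (insert s A) + totalU ψ B := by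
  unfold totalU
  rw [← Finset.sum_add_distrib, ← Finset.sum_add_distrib]
  exact Finset.sum_le_sum fun j _ => trajU_submod (ψ j) (hψ j) hAB s

lemma antitone_sum_bound (g : ℕ → ℝ) (n k : ℕ) (hk : k ≤ n)
    (hanti : ∀ i j, i ≤ j → j < n → g j ≤ g i) :
    (k : ℝ) * ∑ i ∈ range n, g i ≤ (n : ℝ) * ∑ i ∈ range k, g i := by
  rcases Nat.eq_zero_or_pos k with rfl | hk1
  · simp
  · set m := g (k - 1) with hm
    have hsplit : ∑ i ∈ range n, g i = ∑ i ∈ range k, g i + ∑ i ∈ Ico k n, g i := by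
      rw [range_eq_Ico, ← Finset.sum_Ico_consecutive g (Nat.zero_le k) hk, range_eq_Ico]
    have h1 : (k : ℝ) * m ≤ ∑ i ∈ range k, g i := by
      calc (k : ℝ) * m = ∑ _i ∈ range k, m := by
            rw [Finset.sum_const, card_range, nsmul_eq_mul]
        _ ≤ ∑ i ∈ range k, g i :=
            Finset.sum_le_sum fun i hi => by
              refine hanti i (k - 1) ?_ (by omega)
              have := Finset.mem_range.mp hi; omega
    have h2 : ∑ i ∈ Ico k n, g i ≤ ((n : ℝ) - k) * m := by
      calc ∑ i ∈ Ico k n, g i ≤ ∑ _i ∈ Ico k n, m :=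
            Finset.sum_le_sum fun i hi => by
              have h := Finset.mem_Ico.mp hi
              exact hanti (k - 1) i (by omega) h.2
        _ = ((n : ℝ) - k) * m := by
            rw [Finset.sum_const, Nat.card_Ico, nsmul_eq_mul]
            rw [Nat.cast_sub hk]
    have hcast : (k : ℝ) ≤ (n : ℝ) := by exact_mod_cast hk
    have hk0 : (0 : ℝ) ≤ (k : ℝ) := Nat.cast_nonneg k
    rw [hsplit]
    nlinarith [mul_le_mul_of_nonneg_left h2 hk0,
      mul_le_mul_of_nonneg_left h1 (sub_nonneg.mpr hcast)]

/-- A greedy sequence of length `k` for a set function `f` over a ground set `Shat ⊆ S`: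
`Q 0 = ∅` and at each step `θ` (for `1 ≤ θ ≤ k`), `Q θ` is obtained from `Q (θ-1)` by
inserting a new element `s_θ ∈ Shat \ Q (θ-1)`, chosen so that no other single insertion
of an element of `Shat` gives a larger value of `f`. -/
def IsGreedySeqOn {S : Type*} [DecidableEq S] (f : Finset S → ℝ) (Shat : Finset S)
    (Q : ℕ → Finset S) (k : ℕ) : Prop :=
  Q 0 = ∅ ∧ ∀ θ, 1 ≤ θ → θ ≤ k →
    (∃ s ∈ Shat, s ∉ Q (θ - 1) ∧ Q θ = insert s (Q (θ - 1))) ∧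
    ∀ s ∈ Shat, f (insert s (Q (θ - 1))) ≤ f (Q θ)

/-- binary preference function. If every trajectory is covered by some
cluster representative in `Ŝ` (i.e. has preference `1` for it), then `U(Ŝ) = |T|` and,
for a greedy sequence over `Ŝ` that exhausts `Ŝ` in `|Ŝ|` steps, the length-`k` prefix
satisfies `U(Q̂_k) ≥ (k/|Ŝ|)·U(OPT)` for every `OPT ⊆ S`. -/
theorem netclus_binary_approx {T S : Type*} [Fintype T] [Fintype S] [DecidableEq S]
    (ψ : T → S → ℝ) (hψ : ∀ j s, 0 ≤ ψ j s ∧ ψ j s ≤ 1)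
    (hbin : ∀ j s, ψ j s = 0 ∨ ψ j s = 1)
    (Shat : Finset S) (hcover : ∀ j : T, ∃ s ∈ Shat, ψ j s = 1)
    (k : ℕ) (hk : k ≤ Shat.card)
    (Q : ℕ → Finset S) (hgreedy : IsGreedySeqOn (totalU ψ) Shat Q Shat.card)
    (hQn : Q Shat.card = Shat) :
    totalU ψ Shat = (Fintype.card T : ℝ) ∧
    ∀ OPT : Finset S, ((k : ℝ) / (Shat.card : ℝ)) * totalU ψ OPT ≤ totalU ψ (Q k) := by
  obtain ⟨hQ0, hstep⟩ := hgreedy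
  have hψ0 : ∀ j s, 0 ≤ ψ j s := fun j s => (hψ j s).1
  have hψ1 : ∀ j s, ψ j s ≤ 1 := fun j s => (hψ j s).2
  set n := Shat.card with hn
  -- Part 1
  have hShat : totalU ψ Shat = (Fintype.card T : ℝ) := by
    have hj : ∀ j : T, trajU (ψ j) Shat = 1 := by
      intro j
      obtain ⟨s, hs, hs1⟩ := hcover j
      have hne : Shat.Nonempty := ⟨s, hs⟩
      rw [trajU, dif_pos hne]
      refine le_antisymm (sup'_le hne _ fun t _ => hψ1 j t) ?_
      rw [← hs1]
      exact le_sup' (ψ j) hs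
    simp [totalU, hj]
  refine ⟨hShat, ?_⟩
  intro OPT
  -- the gain sequence
  set G : ℕ → ℝ := fun i => totalU ψ (Q (i + 1)) - totalU ψ (Q i) with hG
  have hQ0' : totalU ψ (Q 0) = 0 := by rw [hQ0, totalU_empty]
  have htel : ∀ m : ℕ, ∑ i ∈ range m, G i = totalU ψ (Q m) - totalU ψ (Q 0) :=
    fun m => Finset.sum_range_sub (fun i => totalU ψ (Q i)) m
  have hsucc : ∀ i, i + 1 < n → G (i + 1) ≤ G i := by
    intro i hi
    obtain ⟨⟨s1, hs1S, _, hQ1⟩, hmax1⟩ := hstep (i + 1) (by omega) (by omega)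
    obtain ⟨⟨s2, hs2S, _, hQ2⟩, _⟩ := hstep (i + 2) (by omega) (by omega)
    simp only [Nat.add_sub_cancel] at hQ1 hmax1
    have h2' : Q (i + 2) = insert s2 (Q (i + 1)) := by
      simpa using hQ2
    have hsub : Q i ⊆ Q (i + 1) := by
      rw [hQ1]; exact subset_insert _ _
    have hsm := totalU_submod ψ hψ0 hsub s2
    have hgr := hmax1 s2 hs2S
    simp only [hG]
    rw [h2']
    linarith
  have hanti : ∀ i j, i ≤ j → j < n → G j ≤ G i := by
    intro i j hij hj
    induction j with
    | zero => have : i = 0 := by omega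
              subst this; exact le_refl _
    | succ j ih =>
      rcases Nat.lt_or_ge i (j + 1) with h | h
      · exact le_trans (hsucc j hj) (ih (by omega) (by omega))
      · have : i = j + 1 := by omega
        subst this; exact le_refl _
  have hsum_n : ∑ i ∈ range n, G i = (Fintype.card T : ℝ) := by
    rw [htel n, hQ0', hQn, hShat, sub_zero]
  have hsum_k : ∑ i ∈ range k, G i = totalU ψ (Q k) := by
    rw [htel k, hQ0', sub_zero]
  have hkey : (k : ℝ) * totalU ψ OPT ≤ (n : ℝ) * totalU ψ (Q k) := by
    have h1 : (k : ℝ) * totalU ψ OPT ≤ (k : ℝ) * (Fintype.card T : ℝ) :=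
      mul_le_mul_of_nonneg_left (totalU_le_card ψ hψ1 OPT) (Nat.cast_nonneg k)
    have h2 := antitone_sum_bound G n k hk hanti
    rw [hsum_n, hsum_k] at h2
    linarith
  rcases Nat.eq_zero_or_pos n with hn0 | hn0
  · have hk0 : k = 0 := by omega
    subst hk0
    simp [hQ0']
  · have hnpos : (0 : ℝ) < (n : ℝ) := by exact_mod_cast hn0
    rw [div_mul_eq_mul_div, div_le_iff₀ hnpos]
    linarith
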